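/- Let L ≥ 1, m_ℓ ≥ 1 for ℓ ∈ [L], U > 0, ε > 0, and let T be the ⌈2/ε⌉-th largest value of the multiset {U·m_1, …, U·m_L} (with T := 0 if ⌈2/ε⌉ > L). Consider the linear program: minimize ∑_{ℓ≤L} S^{(ℓ)} + τ/ε over reals S^{(1)}, …, S^{(L)}, τ subject to U·m_ℓ − 2S^{(ℓ)} ≤ τ and S^{(ℓ)} ≥ 0 for all ℓ ∈ [L], and τ ≥ 0. Then the point τ* := T, S^{(ℓ),*} := max{(U·m_ℓ − T)/2, 0} is feasible and optimal: every feasible point (S^{(1)}, …, S^{(L)}, τ) satisfies ∑_ℓ S^{(ℓ)} + τ/ε ≥ ∑_ℓ max{(U·m_ℓ − T)/2, 0} + T/ε. -/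

import Mathlib

/-! Write `a ℓ = U * m ℓ`. For fixed `τ` the best feasible `S` is `S ℓ = max ((a ℓ - τ) / 2) 0`,
which leaves the convex piecewise-linear function `τ ↦ ∑ ℓ max ((a ℓ - τ) / 2) 0 + τ / ε` on
`τ ≥ 0`. Moving `τ` up from `T` raises it at rate at least `1/ε - #{ℓ | T < a ℓ}/2 ≥ 0`, because
at most `⌈2/ε⌉ - 1 < 2/ε` values exceed `T` strictly; moving `τ` down from `T > 0` raises it at
rate at least `#{ℓ | T ≤ a ℓ}/2 - 1/ε ≥ 0`, because at least `⌈2/ε⌉ ≥ 2/ε` values are `≥ T`. -/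

open Finset

noncomputable def kthLargest {L : ℕ} (v : Fin L → ℝ) (k : ℕ) : ℝ :=
  (((Finset.univ.val.map v).sort (· ≤ ·)).reverse).getD (k - 1) 0

namespace List

variable {α : Type*} [LinearOrder α] {l : List α}

theorem SortedGE.countP_lt_getElem_le (hl : l.SortedGE) {j : ℕ} (hj : j < l.length) :
    l.countP (fun y => l[j] < y) ≤ j := by
  have hdrop : (l.drop j).countP (fun y => l[j] < y) = 0 := by
    refine countP_eq_zero.2 fun y hy => ?_
    obtain ⟨i, hi, rfl⟩ := mem_iff_getElem.1 hy
    simpa [getElem_drop] using hl.getElem_ge_getElem_of_le (Nat.le_add_right j i)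
  calc l.countP (fun y => l[j] < y)
      = (l.take j).countP (fun y => l[j] < y) + (l.drop j).countP (fun y => l[j] < y) := by
        rw [← countP_append, take_append_drop]
    _ ≤ j := by
        rw [hdrop, add_zero]
        exact countP_le_length.trans (length_take_le j l)

theorem SortedGE.succ_le_countP_getElem_le (hl : l.SortedGE) {j : ℕ} (hj : j < l.length) :
    j + 1 ≤ l.countP (fun y => l[j] ≤ y) := by
  have htake : (l.take (j + 1)).countP (fun y => l[j] ≤ y) = j + 1 := by
    rw [countP_eq_length.2, length_take_of_le hj]
    intro y hy
    obtain ⟨i, hi, rfl⟩ := mem_iff_getElem.1 hy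
    simp only [length_take, lt_min_iff] at hi
    simpa [getElem_take] using hl.getElem_ge_getElem_of_le (Nat.lt_succ_iff.1 hi.1)
  exact htake ▸ (take_sublist (j + 1) l).countP_le

end List

theorem Multiset.sortedGE_reverse_sort {α : Type*} [LinearOrder α] (s : Multiset α) :
    (s.sort (· ≤ ·)).reverse.SortedGE :=
  List.sortedGE_reverse.2 (pairwise_sort _ _).sortedLE

section kthLargest

variable {L : ℕ} (v : Fin L → ℝ) (k : ℕ)

theorem card_filter_eq_countP_reverse_sort (p : ℝ → Prop) [DecidablePred p] :
    #{ℓ | p (v ℓ)} = (((univ.val.map v).sort (· ≤ ·)).reverse).countP (fun y => p y) := by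
  rw [List.countP_reverse, ← Multiset.coe_countP, Multiset.sort_eq, Multiset.countP_map]
  rfl

theorem card_lt_kthLargest_le : #{ℓ | kthLargest v k < v ℓ} ≤ k - 1 := by
  rcases lt_or_ge (k - 1) L with hk | hk
  · have hk' : k - 1 < (((univ.val.map v).sort (· ≤ ·)).reverse).length := by simpa using hk
    rw [card_filter_eq_countP_reverse_sort, kthLargest, List.getD_eq_getElem _ _ hk']
    exact (Multiset.sortedGE_reverse_sort _).countP_lt_getElem_le hk'
  · exact (card_filter_le _ _).trans (by simpa using hk)

theorem le_card_kthLargest_le (hk : k ≤ L) : k ≤ #{ℓ | kthLargest v k ≤ v ℓ} := by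
  obtain _ | k := k
  · exact Nat.zero_le _
  have hk' : k < (((univ.val.map v).sort (· ≤ ·)).reverse).length := by simpa using hk
  rw [card_filter_eq_countP_reverse_sort, kthLargest, Nat.add_sub_cancel,
    List.getD_eq_getElem _ _ hk']
  exact (Multiset.sortedGE_reverse_sort _).succ_le_countP_getElem_le hk'

theorem kthLargest_eq_zero_of_lt (hk : L < k) : kthLargest v k = 0 :=
  List.getD_eq_default _ _ (by simp; omega)

theorem kthLargest_nonneg (hv : ∀ ℓ, 0 ≤ v ℓ) : 0 ≤ kthLargest v k := by
  rw [kthLargest, List.getD_eq_getElem?_getD]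
  cases h : (((univ.val.map v).sort (· ≤ ·)).reverse)[k - 1]? with
  | none => exact le_rfl
  | some x =>
    obtain ⟨ℓ, -, rfl⟩ := Multiset.mem_map.1 <| (Multiset.mem_sort _).1 <|
      List.mem_reverse.1 (List.mem_of_getElem? h)
    exact hv ℓ

end kthLargest

section Threshold

variable {ι : Type*} (s : Finset ι) (a : ι → ℝ) {T τ : ℝ}

theorem sum_max_sub_le_sum_max_sub_add_card_mul (h : T ≤ τ) :
    ∑ i ∈ s, max (a i - T) 0 ≤ ∑ i ∈ s, max (a i - τ) 0 + #{i ∈ s | T < a i} * (τ - T) := by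
  rw [natCast_card_filter, sum_mul, ← sum_add_distrib]
  refine sum_le_sum fun i _ => ?_
  split_ifs <;> simp only [max_def] <;> split_ifs <;> linarith

theorem sum_max_sub_add_card_mul_le_sum_max_sub (h : τ ≤ T) :
    ∑ i ∈ s, max (a i - T) 0 + #{i ∈ s | T ≤ a i} * (T - τ) ≤ ∑ i ∈ s, max (a i - τ) 0 := by
  rw [natCast_card_filter, sum_mul, ← sum_add_distrib]
  refine sum_le_sum fun i _ => ?_
  split_ifs <;> simp only [max_def] <;> split_ifs <;> linarith

theorem sum_max_sub_add_mul_le {c : ℝ} (hτ : 0 ≤ τ) (hlt : #{i ∈ s | T < a i} ≤ c)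
    (hle : 0 < T → c ≤ #{i ∈ s | T ≤ a i}) :
    ∑ i ∈ s, max (a i - T) 0 + c * T ≤ ∑ i ∈ s, max (a i - τ) 0 + c * τ := by
  rcases le_total T τ with h | h
  · have := sum_max_sub_le_sum_max_sub_add_card_mul s a h
    linarith [mul_le_mul_of_nonneg_right hlt (sub_nonneg.2 h)]
  · have := sum_max_sub_add_card_mul_le_sum_max_sub s a h
    rcases h.lt_or_eq with h | rfl
    · linarith [mul_le_mul_of_nonneg_right (hle (hτ.trans_lt h)) (sub_nonneg.2 h.le)]
    · exact le_rfl

end Threshold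

theorem stmt6_general {L : ℕ} (m : Fin L → ℕ)
    (U ε : ℝ) (hU : 0 < U) (hε : 0 < ε)
    (T : ℝ) (hT : T = kthLargest (fun ℓ => U * (m ℓ : ℝ)) ⌈(2 : ℝ) / ε⌉₊) :
    (∀ ℓ : Fin L, U * (m ℓ : ℝ) - 2 * max ((U * (m ℓ : ℝ) - T) / 2) 0 ≤ T) ∧
    (∀ ℓ : Fin L, 0 ≤ max ((U * (m ℓ : ℝ) - T) / 2) 0) ∧ 0 ≤ T ∧
    (∀ (S : Fin L → ℝ) (τ : ℝ),
      (∀ ℓ, U * (m ℓ : ℝ) - 2 * S ℓ ≤ τ) → (∀ ℓ, 0 ≤ S ℓ) → 0 ≤ τ →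
      (∑ ℓ, max ((U * (m ℓ : ℝ) - T) / 2) 0) + T / ε ≤ (∑ ℓ, S ℓ) + τ / ε) := by
  have hT0 : 0 ≤ T := hT ▸ kthLargest_nonneg _ _ fun ℓ => by positivity
  refine ⟨fun ℓ => by linarith [le_max_left ((U * (m ℓ : ℝ) - T) / 2) 0],
    fun ℓ => le_max_right _ _, hT0, fun S τ hSτ hS hτ => ?_⟩
  have hk : 0 < ⌈2 / ε⌉₊ := Nat.ceil_pos.2 (by positivity)
  have hlt : (#{ℓ | T < U * (m ℓ : ℝ)} : ℝ) ≤ 2 / ε :=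
    calc (#{ℓ | T < U * (m ℓ : ℝ)} : ℝ) ≤ (⌈2 / ε⌉₊ - 1 : ℕ) := by
          exact_mod_cast hT ▸ card_lt_kthLargest_le _ _
      _ ≤ 2 / ε := (Nat.lt_ceil.1 (by omega)).le
  have hle (hTpos : 0 < T) : 2 / ε ≤ #{ℓ | T ≤ U * (m ℓ : ℝ)} := by
    have hkL : ⌈2 / ε⌉₊ ≤ L := by
      by_contra! h
      exact hTpos.ne' (hT ▸ kthLargest_eq_zero_of_lt _ _ h)
    exact (Nat.le_ceil _).trans (by exact_mod_cast hT ▸ le_card_kthLargest_le _ _ hkL)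
  have key := sum_max_sub_add_mul_le univ _ hτ hlt hle
  have hS' : ∑ ℓ, max ((U * (m ℓ : ℝ) - τ) / 2) 0 ≤ ∑ ℓ, S ℓ :=
    sum_le_sum fun ℓ _ => max_le (by linarith [hSτ ℓ]) (hS ℓ)
  have halve (x : ℝ) : max (x / 2) 0 = max x 0 / 2 := by
    rw [← max_div_div_right zero_le_two, zero_div]
  simp only [halve, ← sum_div] at hS' ⊢
  have hT2 : 2 / ε * T = 2 * (T / ε) := by ring
  have hτ2 : 2 / ε * τ = 2 * (τ / ε) := by ring
  linarith

/-- the linear program in the proof of Theorem 2, case `d = 1`.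
For the LP `minimize ∑_ℓ S^{(ℓ)} + τ/ε` subject to `U m_ℓ − 2 S^{(ℓ)} ≤ τ`, `S^{(ℓ)} ≥ 0`,
`τ ≥ 0`, the point `τ* = T`, `S^{(ℓ),*} = max{(U m_ℓ − T)/2, 0}` is feasible and optimal,
where `T` is the `⌈2/ε⌉`-th largest value of `{U·m_1, …, U·m_L}` (with `T = 0` if
`⌈2/ε⌉ > L`). -/
theorem stmt6 {L : ℕ} (hL : 0 < L) (m : Fin L → ℕ) (hm : ∀ ℓ, 1 ≤ m ℓ)
    (U ε : ℝ) (hU : 0 < U) (hε : 0 < ε)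
    (T : ℝ) (hT : T = kthLargest (fun ℓ => U * (m ℓ : ℝ)) ⌈(2 : ℝ) / ε⌉₊) :
    (∀ ℓ : Fin L, U * (m ℓ : ℝ) - 2 * max ((U * (m ℓ : ℝ) - T) / 2) 0 ≤ T) ∧
    (∀ ℓ : Fin L, 0 ≤ max ((U * (m ℓ : ℝ) - T) / 2) 0) ∧ 0 ≤ T ∧
    (∀ (S : Fin L → ℝ) (τ : ℝ),
      (∀ ℓ, U * (m ℓ : ℝ) - 2 * S ℓ ≤ τ) → (∀ ℓ, 0 ≤ S ℓ) → 0 ≤ τ →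
      (∑ ℓ, max ((U * (m ℓ : ℝ) - T) / 2) 0) + T / ε ≤ (∑ ℓ, S ℓ) + τ / ε) :=
  stmt6_general m U ε hU hε T hT
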